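/- If f is holomorphic on the punctured unit disc with a pole of order at most n at 0 and continuous on the closed disc minus the origin (i.e., z^n f(z) extends holomorphically to the disc and continuously to the closed disc), then for 0 < |z| < 1, f(z) = ∫₀^{2π} f(e^{it})·conj(S⁽ⁿ⁾(e^{it},z)) dt, where S⁽ⁿ⁾(ζ,z) = (1/(2π))·1/((ζ·conj(z))^n(1 - ζ·conj(z))). -/

import Mathlib

open Complex Real MeasureTheory

/-!
On the unit circle `conj ζ = ζ⁻¹`, so `f ζ` times the conjugated Szegő kernel at `z` equals
`g ζ · ζ / (2π z ^ n (ζ - z))`, and `ζ dt = dζ / I`. The integral is therefore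
`(2π I z ^ n)⁻¹ ∮ g ζ / (ζ - z) dζ`, which by Cauchy's integral formula for `g` is `g z / z ^ n = f z`.
-/

open ComplexConjugate

lemma conj_one_div_pow_mul_one_sub {ζ : ℂ} (hζ : ‖ζ‖ = 1) (w : ℂ) (n : ℕ) :
    conj (1 / ((ζ * conj w) ^ n * (1 - ζ * conj w))) = ζ ^ (n + 1) / (w ^ n * (ζ - w)) := by
  have hζ0 : ζ ≠ 0 := norm_ne_zero_iff.mp (by rw [hζ]; exact one_ne_zero)
  have hden : (ζ⁻¹ * w) ^ n * (1 - ζ⁻¹ * w) = w ^ n * (ζ - w) / ζ ^ (n + 1) := by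
    rw [mul_pow, inv_pow]
    field_simp
    ring
  rw [map_div₀, map_one, map_mul, map_pow, map_sub, map_one, map_mul, conj_conj,
    ← inv_eq_conj hζ, hden, one_div_div]

theorem szego_formula_punctured_disc (n : ℕ) (g : ℂ → ℂ)
    (hgc : ContinuousOn g (Metric.closedBall 0 1))
    (hgd : DifferentiableOn ℂ g (Metric.ball 0 1))
    (f : ℂ → ℂ) (hf : ∀ w : ℂ, w ≠ 0 → f w = g w / w ^ n)
    (z : ℂ) (hz0 : 0 < ‖z‖) (hz1 : ‖z‖ < 1) :
    f z = ∫ t in (0:ℝ)..(2 * π),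
      f (Complex.exp (I * t)) *
        starRingEnd ℂ ((1 / (2 * π)) *
          (1 / ((Complex.exp (I * t) * starRingEnd ℂ z) ^ n *
            (1 - Complex.exp (I * t) * starRingEnd ℂ z)))) := by
  have hz : z ≠ 0 := norm_pos_iff.mp hz0
  have hcauchy : (∮ ζ in C(0, 1), (ζ - z)⁻¹ • g ζ) = (2 * π * I) • g z :=
    DiffContOnCl.circleIntegral_sub_inv_smul ⟨hgd, by rwa [closure_ball 0 one_ne_zero]⟩
      (mem_ball_zero_iff.mpr hz1)
  have hintegrand (t : ℝ) :
      f (exp (I * t)) * conj (1 / (2 * π) *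
          (1 / ((exp (I * t) * conj z) ^ n * (1 - exp (I * t) * conj z)))) =
        (2 * π * I * z ^ n)⁻¹ *
          (deriv (circleMap 0 1) t • ((circleMap 0 1 t - z)⁻¹ • g (circleMap 0 1 t))) := by
    have hζ : circleMap 0 1 t = exp (I * t) := by simp [circleMap_zero, mul_comm]
    have hζ0 : exp (I * t) ≠ 0 := exp_ne_zero _
    rw [deriv_circleMap, hζ, map_mul, conj_one_div_pow_mul_one_sub (norm_exp_I_mul_ofReal t),
      hf _ hζ0]
    simp only [map_div₀, map_one, map_mul, map_ofNat, conj_ofReal, smul_eq_mul]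
    field_simp
    ring
  rw [intervalIntegral.integral_congr fun t _ => hintegrand t,
    intervalIntegral.integral_const_mul]
  change _ = _ * ∮ ζ in C(0, 1), (ζ - z)⁻¹ • g ζ
  rw [hcauchy, hf z hz, smul_eq_mul]
  field_simp
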